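/- arXiv:2304.09679 — 2 statements merged into one kernel-verified Lean document; each statement's English description precedes it below -/
import Mathlib

section
/- For every integer ℓ ≥ 1, the graph G_ℓ is 2-degenerate (for every choice of the injections μ_s and of the rib endpoint labelings in the construction). -/
namespace PaperDefs

/-- `v : Fin n → V` is a path of order `n` in `G`: distinct vertices,
consecutive ones adjacent. -/
def IsPathSeq {V : Type*} (G : SimpleGraph V) {n : ℕ} (v : Fin n → V) : Prop :=
  Function.Injective v ∧ ∀ i j : Fin n, (j : ℕ) = (i : ℕ) + 1 → G.Adj (v i) (v j)

/-- `v : Fin n → V` is an induced path of order `n` in `G`: a path with no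
edge between vertices at distance ≥ 2 along the path. -/
def IsInducedPathSeq {V : Type*} (G : SimpleGraph V) {n : ℕ} (v : Fin n → V) : Prop :=
  IsPathSeq G v ∧ ∀ i j : Fin n, (i : ℕ) + 1 < (j : ℕ) → ¬ G.Adj (v i) (v j)

/-- `G` is `k`-degenerate: every nonempty (induced) subgraph has a vertex of
degree at most `k`. -/
def KDeg {V : Type*} (G : SimpleGraph V) (k : ℕ) : Prop :=
  ∀ s : Set V, s.Nonempty → ∃ v ∈ s, {u | u ∈ s ∧ G.Adj v u}.ncard ≤ k

/-- `G` has a Hamiltonian path. -/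
def HamPath {V : Type*} [Fintype V] (G : SimpleGraph V) : Prop :=
  ∃ v : Fin (Fintype.card V) → V, Function.Bijective v ∧
    ∀ i j : Fin (Fintype.card V), (j : ℕ) = (i : ℕ) + 1 → G.Adj (v i) (v j)

/-- `y` is `r`-reachable from `x` w.r.t. the vertex ordering given by the
injection `f : V → ℕ`. -/
def RReach {V : Type*} (G : SimpleGraph V) (f : V → ℕ) (r : ℕ) (x y : V) : Prop :=
  f y < f x ∧ ∃ w : G.Walk x y, w.IsPath ∧ w.length ≤ r ∧
    ∀ z ∈ w.support, z ≠ x → z ≠ y → f x < f z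

/-- `col_r(G) ≤ k`: some linear order on the vertices witnesses that at most `k`
vertices are `r`-reachable from every vertex. -/
def ColAtMost {V : Type*} (G : SimpleGraph V) (r k : ℕ) : Prop :=
  ∃ f : V → ℕ, Function.Injective f ∧ ∀ x : V, {y | RReach G f r x y}.ncard ≤ k

end PaperDefs
namespace PaperDefs

/-- The function `h` with `h 1 = 3` and `h (ℓ+1) = 2 + 2 * h ℓ`
(equivalently `h ℓ = 5·2^(ℓ-1) - 2` for `ℓ ≥ 1`). -/
def h : ℕ → ℕ
  | 0 => 0
  | 1 => 3
  | n + 2 => 2 + 2 * h (n + 1)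

/-- Shift a set of pairs of integers by `i`. -/
def shift (X : Set (ℕ × ℕ)) (i : ℕ) : Set (ℕ × ℕ) := (fun q => (q.1 + i, q.2 + i)) '' X

/-- The nested interval system `N_ℓ`. -/
def Nset : ℕ → Set (ℕ × ℕ)
  | 0 => ∅
  | 1 => {(1, 3)}
  | ℓ + 2 => {(1, h (ℓ + 2))} ∪ shift (Nset (ℓ + 1)) 1 ∪ shift (Nset (ℓ + 1)) (h (ℓ + 1) + 1)

/-- Nodes of the complete binary tree of depth `p`, heap-indexed by
`1, …, 2^p - 1` (node `i` has children `2i` and `2i+1`). -/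
def isNode (p i : ℕ) : Prop := 1 ≤ i ∧ i < 2 ^ p

/-- Adjacency in the complete binary tree of depth `p` (heap indexing). -/
def treeAdj (p s t : ℕ) : Prop := isNode p s ∧ isNode p t ∧ (s = t / 2 ∨ t = s / 2)

/-- The depth of node `i` (the root `1` has depth `1`). -/
def nodeDepth (i : ℕ) : ℕ := Nat.log 2 i + 1

/-- `s ⪯ t` : `s` is an ancestor of `t` (heap indexing). -/
def anc (s t : ℕ) : Prop := ∃ k, t / 2 ^ k = s

/-- `s ≺ t` : `s` is a strict ancestor of `t` (heap indexing). -/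
def strictAnc (s t : ℕ) : Prop := ∃ k, 1 ≤ k ∧ t / 2 ^ k = s

/-- The nodes of the complete binary tree of depth `p`. -/
abbrev TNode (p : ℕ) := {i : Fin (2 ^ p) // 1 ≤ (i : ℕ)}

/-- The non-root nodes of the complete binary tree of depth `p`. -/
abbrev NRNode (p : ℕ) := {i : Fin (2 ^ p) // 2 ≤ (i : ℕ)}

/-- Vertices of a blow-up of the complete binary tree of depth `p`:
for every node `s` a clique `K^s` on 3 vertices (`Sum.inl (s, i)`),
and for every non-root node `t` the four subdivision vertices
`pred t = {x₁, y₁, x₂, y₂}` (`Sum.inr (t, j)` with `j = 0, 1, 2, 3`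
standing for `x₁, y₁, x₂, y₂`; so `tpred t = {0, 2}` and `bpred t = {1, 3}`). -/
abbrev BV (p : ℕ) := (TNode p × Fin 3) ⊕ (NRNode p × Fin 4)

/-- The projection `π` mapping a vertex of the blow-up to (the heap index of)
the node of the tree it originates from. -/
def πn {p : ℕ} : BV p → ℕ
  | Sum.inl (s, _) => (s.1 : ℕ)
  | Sum.inr (t, _) => (t.1 : ℕ)

/-- The depth of a vertex of the blow-up. -/
def vDepth {p : ℕ} (u : BV p) : ℕ := nodeDepth (πn u)

/-- Edges of the triangle `K^s` (on vertex set `Fin 3`) are identified with the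
vertex they miss; `other k b` enumerates (as `b` ranges over `Bool`) the two
endpoints of the edge `k`. -/
def other (k : Fin 3) (b : Bool) : Fin 3 := k + (if b then 1 else 2)

/-- The arbitrary choices made when constructing a blow-up of the complete binary
tree of depth `p`: the injections `μ_s` from the neighbors of `s` to the edges of
`K^s` (an edge of `K^s` being encoded by the vertex of `Fin 3` it misses), the
choices `ε` of labelings of the endpoints of the edges `μ_s t`, and the top (root)
edge of the root clique, which must be outside the image of `μ` at the root. -/
structure BUChoices (p : ℕ) where
  μ : ℕ → ℕ → Fin 3
  ε : ℕ → ℕ → Bool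
  rootTop : Fin 3
  μ_inj : ∀ s t t', treeAdj p s t → treeAdj p s t' → μ s t = μ s t' → t = t'
  rootTop_spec : ∀ t, treeAdj p 1 t → μ 1 t ≠ rootTop

/-- The (encoding of the) top edge of the clique `K^s`. -/
def topIdx {p : ℕ} (C : BUChoices p) (s : ℕ) : Fin 3 :=
  if s = 1 then C.rootTop else C.μ s (s / 2)

/-- The base relation of the blow-up: clique edges inside each `K^s`, and for every
non-root node `t` with parent `s` the two paths
`L(s,t) = u₁ x₁ y₁ v₁` and `R(s,t) = u₂ x₂ y₂ v₂`, where `u₁, u₂` are the endpoints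
of `μ_s t` and `v₁, v₂` those of `μ_t s` (as labeled by `ε`). -/
def buRel {p : ℕ} (C : BUChoices p) : BV p → BV p → Prop
  | Sum.inl (s, i), Sum.inl (s', j) => s = s' ∧ i ≠ j
  | Sum.inl (s, i), Sum.inr (t, j) =>
      ((s.1 : ℕ) = (t.1 : ℕ) / 2 ∧
        ((j = 0 ∧ i = other (C.μ (s.1 : ℕ) (t.1 : ℕ)) (C.ε (s.1 : ℕ) (t.1 : ℕ))) ∨
         (j = 2 ∧ i = other (C.μ (s.1 : ℕ) (t.1 : ℕ)) (! C.ε (s.1 : ℕ) (t.1 : ℕ))))) ∨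
      ((s.1 : ℕ) = (t.1 : ℕ) ∧
        ((j = 1 ∧ i = other (C.μ (t.1 : ℕ) ((t.1 : ℕ) / 2)) (C.ε (t.1 : ℕ) ((t.1 : ℕ) / 2))) ∨
         (j = 3 ∧ i = other (C.μ (t.1 : ℕ) ((t.1 : ℕ) / 2)) (! C.ε (t.1 : ℕ) ((t.1 : ℕ) / 2)))))
  | Sum.inr (t, j), Sum.inr (t', j') => t = t' ∧ ((j = 0 ∧ j' = 1) ∨ (j = 2 ∧ j' = 3))
  | Sum.inr _, Sum.inl _ => False

/-- The blow-up of the complete binary tree of depth `p`, for the choices `C`. -/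
def blowup {p : ℕ} (C : BUChoices p) : SimpleGraph (BV p) := SimpleGraph.fromRel (buRel C)

/-- A vertex incident with the root edge of the blow-up. -/
def isRootEnd {p : ℕ} (C : BUChoices p) (u : BV p) : Prop :=
  ∃ s x, u = Sum.inl (s, x) ∧ (s.1 : ℕ) = 1 ∧ x ≠ C.rootTop

/-- The arbitrary choices made when constructing `G_ℓ`: those of the underlying
blow-up of `B_ℓ` (the complete binary tree of depth `h ℓ`) together with, for every
pair `s ≺ t`, the labeling `ρ` of the endpoints `u₁, u₂` of the top edge of `K^s`
used for the ribs towards `pred t`. -/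
structure GChoices (ℓ : ℕ) extends BUChoices (h ℓ) where
  ρ : ℕ → ℕ → Bool

/-- The rib edges: for `s ≺ t` with `(depth s, depth t) ∈ N_ℓ`, the edges
`u₁x₁, u₁x₂, u₂y₁, u₂y₂` where `u₁u₂` is the top edge of `K^s`. -/
def ribRel {ℓ : ℕ} (C : GChoices ℓ) : BV (h ℓ) → BV (h ℓ) → Prop
  | Sum.inl (s, i), Sum.inr (t, j) =>
      strictAnc (s.1 : ℕ) (t.1 : ℕ) ∧ (nodeDepth (s.1 : ℕ), nodeDepth (t.1 : ℕ)) ∈ Nset ℓ ∧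
      (((j = 0 ∨ j = 2) ∧ i = other (topIdx C.toBUChoices (s.1 : ℕ)) (C.ρ (s.1 : ℕ) (t.1 : ℕ))) ∨
       ((j = 1 ∨ j = 3) ∧ i = other (topIdx C.toBUChoices (s.1 : ℕ)) (! C.ρ (s.1 : ℕ) (t.1 : ℕ))))
  | _, _ => False

/-- The graph `G_ℓ`: the blow-up `H_ℓ` of `B_ℓ` together with the ribs. -/
def Gl {ℓ : ℕ} (C : GChoices ℓ) : SimpleGraph (BV (h ℓ)) :=
  SimpleGraph.fromRel (fun u v => buRel C.toBUChoices u v ∨ ribRel C u v)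

/-- `s` is a source of `B_ℓ` of rank `a`. -/
def IsSourceOfRank (ℓ s a : ℕ) : Prop :=
  isNode (h ℓ) s ∧ 1 ≤ a ∧ a ≤ ℓ ∧ (nodeDepth s, nodeDepth s + h a - 1) ∈ Nset ℓ

/-- `s` is a source of `B_ℓ`. -/
def IsSource (ℓ s : ℕ) : Prop := isNode (h ℓ) s ∧ ∃ j, (nodeDepth s, j) ∈ Nset ℓ

/-- `t` is an internal node of `B_ℓ(s)`, for `s` a source of rank `a`. -/
def InternalNode (ℓ s a t : ℕ) : Prop :=
  strictAnc s t ∧ nodeDepth t < nodeDepth s + h a - 1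

/-- `t` is a node of the subtree `B_ℓ(s)`, for `s` a source of rank `a`. -/
def SubtreeNode (ℓ s a t : ℕ) : Prop :=
  anc s t ∧ nodeDepth t ≤ nodeDepth s + h a - 1

/-- The set of ranks of sources `s` such that `t` is an internal node of `B_ℓ(s)`. -/
def tauSet (ℓ t : ℕ) : Set ℕ := {a | ∃ s, IsSourceOfRank ℓ s a ∧ InternalNode ℓ s a t}

/-- `τ(u)`: the minimum rank of a source `s` such that `π(u)` is an internal node of
`B_ℓ(s)`, and `ℓ + 1` if there is no such source. -/
noncomputable def tau (ℓ : ℕ) (u : BV (h ℓ)) : ℕ := by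
  classical
  exact if (tauSet ℓ (πn u)).Nonempty then sInf (tauSet ℓ (πn u)) else ℓ + 1

/-- `u` is a vertex incident with the top edge of the clique `K^s`. -/
def TopEdgeVert {ℓ : ℕ} (C : GChoices ℓ) (s : ℕ) (u : BV (h ℓ)) : Prop :=
  ∃ sn x, u = Sum.inl (sn, x) ∧ (sn.1 : ℕ) = s ∧ x ≠ topIdx C.toBUChoices s

/-- `u ∈ pred s`. -/
def InPred {p : ℕ} (s : ℕ) (u : BV p) : Prop := ∃ t j, u = Sum.inr (t, j) ∧ (t.1 : ℕ) = s

/-- `u` and `w` lie in a common clique `K^s`. -/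
def CliquePair {p : ℕ} (u w : BV p) : Prop :=
  ∃ s i j, u = Sum.inl (s, i) ∧ w = Sum.inl (s, j)

/-- `uw` is a tree edge of `G_ℓ`: an edge of the blow-up `H_ℓ` that is not a
clique edge. -/
def IsTreeEdge {ℓ : ℕ} (C : GChoices ℓ) (u w : BV (h ℓ)) : Prop :=
  (blowup C.toBUChoices).Adj u w ∧ ¬ CliquePair u w

/-- The source `s` is `Q`-special for the induced path `Q = v`. -/
def QSpecial {ℓ q : ℕ} (C : GChoices ℓ) (v : Fin q → BV (h ℓ)) (s : ℕ) : Prop :=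
  ∃ a, IsSourceOfRank ℓ s a ∧ (∃ i, TopEdgeVert C s (v i)) ∧
    ∃ j, InternalNode ℓ s a (πn (v j))

end PaperDefs
namespace PaperDefs
/-! ### Auxiliary facts for the 2-degeneracy proof -/

lemma h_ge_three : ∀ n : ℕ, 3 ≤ h (n + 1) := by
  intro n
  induction n with
  | zero => simp [h]
  | succ m ih => show 3 ≤ h (m + 2); rw [h]; omega

lemma NsetA : ∀ ℓ c d : ℕ, (c, d) ∈ Nset ℓ → 1 ≤ c ∧ c + 1 ≤ d ∧ d ≤ h ℓ := by
  intro ℓ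
  induction ℓ with
  | zero => intro c d hc; simp [Nset] at hc
  | succ n ih =>
    match n, ih with
    | 0, _ =>
      intro c d hc
      simp [Nset, Prod.ext_iff] at hc
      simp [hc.1, hc.2, h]
    | m + 1, ih =>
      intro c d hc
      have hh := h_ge_three m
      have hstep : h (m + 2) = 2 + 2 * h (m + 1) := rfl
      have hstep2 : h (m + 1 + 1) = h (m + 2) := rfl
      simp only [Nset, Set.mem_union, Set.mem_singleton_iff, shift, Set.mem_image,
        Prod.ext_iff] at hc
      rcases hc with (⟨e1, e2⟩ | ⟨⟨c0, d0⟩, hmem, hc1, hc2⟩) | ⟨⟨c0, d0⟩, hmem, hc1, hc2⟩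
      · subst e1 e2; omega
      · obtain ⟨a1, a2, a3⟩ := ih c0 d0 hmem; omega
      · obtain ⟨a1, a2, a3⟩ := ih c0 d0 hmem; omega

lemma NsetB : ∀ ℓ c c' d : ℕ, (c, d) ∈ Nset ℓ → (c', d) ∈ Nset ℓ → c = c' := by
  intro ℓ
  induction ℓ with
  | zero => intro c c' d hc _; simp [Nset] at hc
  | succ n ih =>
    match n, ih with
    | 0, _ =>
      intro c c' d hc hc'
      simp [Nset, Prod.ext_iff] at hc hc'
      omega
    | m + 1, ih =>
      intro c c' d hc hc'
      have hh := h_ge_three m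
      have hstep : h (m + 2) = 2 + 2 * h (m + 1) := rfl
      have hstep2 : h (m + 1 + 1) = h (m + 2) := rfl
      simp only [Nset, Set.mem_union, Set.mem_singleton_iff, shift, Set.mem_image,
        Prod.ext_iff] at hc hc'
      rcases hc with (⟨e1, e2⟩ | ⟨⟨c0, d0⟩, hmem, hc1, hc2⟩) | ⟨⟨c0, d0⟩, hmem, hc1, hc2⟩ <;>
        rcases hc' with (⟨e1', e2'⟩ | ⟨⟨c0', d0'⟩, hmem', hc1', hc2'⟩) |
          ⟨⟨c0', d0'⟩, hmem', hc1', hc2'⟩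
      · omega
      · obtain ⟨b1, b2, b3⟩ := NsetA _ _ _ hmem'; omega
      · obtain ⟨b1, b2, b3⟩ := NsetA _ _ _ hmem'; omega
      · obtain ⟨a1, a2, a3⟩ := NsetA _ _ _ hmem; omega
      · obtain ⟨a1, a2, a3⟩ := NsetA _ _ _ hmem
        obtain ⟨b1, b2, b3⟩ := NsetA _ _ _ hmem'
        have hd : d0 = d0' := by omega
        subst hd
        have := ih _ _ _ hmem hmem'; omega
      · obtain ⟨a1, a2, a3⟩ := NsetA _ _ _ hmem
        obtain ⟨b1, b2, b3⟩ := NsetA _ _ _ hmem'; omega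
      · obtain ⟨a1, a2, a3⟩ := NsetA _ _ _ hmem; omega
      · obtain ⟨a1, a2, a3⟩ := NsetA _ _ _ hmem
        obtain ⟨b1, b2, b3⟩ := NsetA _ _ _ hmem'; omega
      · obtain ⟨a1, a2, a3⟩ := NsetA _ _ _ hmem
        obtain ⟨b1, b2, b3⟩ := NsetA _ _ _ hmem'
        have hd : d0 = d0' := by omega
        subst hd
        have := ih _ _ _ hmem hmem'; omega
lemma log_div_pow (t : ℕ) : ∀ k : ℕ, 1 ≤ t / 2 ^ k → Nat.log 2 (t / 2 ^ k) = Nat.log 2 t - k := by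
  intro k
  induction k with
  | zero => simp
  | succ n ih =>
    intro hk
    have hdiv : t / 2 ^ (n + 1) = t / 2 ^ n / 2 := by
      rw [pow_succ, Nat.div_div_eq_div_mul]
    rw [hdiv] at hk ⊢
    have h1 : 1 ≤ t / 2 ^ n := by omega
    rw [Nat.log_div_base, ih h1]
    omega

lemma strictAnc_le {s t : ℕ} (hst : strictAnc s t) : 2 * s ≤ t := by
  obtain ⟨k, hk1, hk⟩ := hst
  have h1 : 2 ≤ 2 ^ k := by
    calc 2 = 2 ^ 1 := rfl
    _ ≤ 2 ^ k := Nat.pow_le_pow_right (by norm_num) hk1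
  have h2 : t / 2 ^ k * 2 ^ k ≤ t := Nat.div_mul_le_self _ _
  rw [hk] at h2
  have : 2 * s ≤ s * 2 ^ k := by nlinarith
  omega

lemma anc_depth_unique {s s' t : ℕ} (hs : 1 ≤ s) (hs' : 1 ≤ s')
    (h1 : strictAnc s t) (h2 : strictAnc s' t) (hd : nodeDepth s = nodeDepth s') : s = s' := by
  obtain ⟨k, -, hk⟩ := h1
  obtain ⟨k', -, hk'⟩ := h2
  have e1 : Nat.log 2 (t / 2 ^ k) = Nat.log 2 t - k := log_div_pow t k (by omega)
  have e1' : Nat.log 2 (t / 2 ^ k') = Nat.log 2 t - k' := log_div_pow t k' (by omega)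
  rw [hk] at e1; rw [hk'] at e1'
  have ht0 : t ≠ 0 := by
    rcases Nat.eq_zero_or_pos t with h | h
    · subst h; simp at hk; omega
    · omega
  have hkle : k ≤ Nat.log 2 t := by
    rw [Nat.le_log_iff_pow_le (by norm_num) ht0]
    have := Nat.div_mul_le_self t (2 ^ k)
    rw [hk] at this
    nlinarith [Nat.one_le_two_pow (n := k)]
  have hkle' : k' ≤ Nat.log 2 t := by
    rw [Nat.le_log_iff_pow_le (by norm_num) ht0]
    have := Nat.div_mul_le_self t (2 ^ k')
    rw [hk'] at this
    nlinarith [Nat.one_le_two_pow (n := k')]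
  have : k = k' := by
    simp only [nodeDepth] at hd
    omega
  subst this
  rw [← hk, ← hk']
/-- Position of `j ∈ pred` in the elimination order. -/
def jval : Fin 4 → ℕ := ![0, 2, 1, 3]

/-- Position of clique vertex `i` in the elimination order of `K^s`
(`k` is the top edge index). -/
def cR (k i : Fin 3) : ℕ := if i = k then 2 else if i = k + 1 then 0 else 1

lemma cR_le : ∀ k i : Fin 3, cR k i ≤ 2 := by decide
lemma jval_le : ∀ j : Fin 4, jval j ≤ 3 := by decide
lemma cR_inj : ∀ k i i' : Fin 3, cR k i = cR k i' → i = i' := by decide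
lemma jval_inj : ∀ j j' : Fin 4, jval j = jval j' → j = j' := by decide
lemma cR_lt_cases : ∀ k i i' : Fin 3, cR k i' < cR k i → i' = k + 1 ∨ (i = k ∧ i' = k + 2) := by
  decide
lemma other_ne : ∀ (k : Fin 3) (b : Bool), other k b ≠ k := by decide
lemma other_ne_not : ∀ (k : Fin 3) (b : Bool), other k b ≠ other k (!b) := by decide

/-- The elimination order on the vertices of the blow-up. -/
def fOrd {p : ℕ} (C : BUChoices p) : BV p → ℕ
  | Sum.inl (s, i) => 8 * ((s.1 : Fin (2 ^ p)) : ℕ) + 4 + cR (topIdx C ((s.1 : Fin (2 ^ p)) : ℕ)) i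
  | Sum.inr (t, j) => 8 * ((t.1 : Fin (2 ^ p)) : ℕ) + jval j

lemma fOrd_inj {p : ℕ} (C : BUChoices p) : Function.Injective (fOrd C) := by
  intro u w huw
  match u, w with
  | Sum.inl (s, i), Sum.inl (s', i') =>
    simp only [fOrd] at huw
    have c1 := cR_le (topIdx C ((s.1 : Fin (2 ^ p)) : ℕ)) i
    have c2 := cR_le (topIdx C ((s'.1 : Fin (2 ^ p)) : ℕ)) i'
    have hss : ((s.1 : Fin (2 ^ p)) : ℕ) = ((s'.1 : Fin (2 ^ p)) : ℕ) := by omega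
    have hs : s = s' := Subtype.ext (Fin.ext hss)
    subst hs
    have : cR (topIdx C ((s.1 : Fin (2 ^ p)) : ℕ)) i
        = cR (topIdx C ((s.1 : Fin (2 ^ p)) : ℕ)) i' := by omega
    rw [cR_inj _ _ _ this]
  | Sum.inl (s, i), Sum.inr (t, j) =>
    exfalso
    simp only [fOrd] at huw
    have c1 := cR_le (topIdx C ((s.1 : Fin (2 ^ p)) : ℕ)) i
    have c2 := jval_le j
    omega
  | Sum.inr (t, j), Sum.inl (s, i) =>
    exfalso
    simp only [fOrd] at huw
    have c1 := cR_le (topIdx C ((s.1 : Fin (2 ^ p)) : ℕ)) i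
    have c2 := jval_le j
    omega
  | Sum.inr (t, j), Sum.inr (t', j') =>
    simp only [fOrd] at huw
    have c1 := jval_le j
    have c2 := jval_le j'
    have htt : ((t.1 : Fin (2 ^ p)) : ℕ) = ((t'.1 : Fin (2 ^ p)) : ℕ) := by omega
    have ht : t = t' := Subtype.ext (Fin.ext htt)
    subst ht
    have hj : j = j' := jval_inj j j' (by omega)
    rw [hj]

lemma ncard_le_two {α : Type*} {S : Set α} {a b : α} (hsub : S ⊆ {a, b}) : S.ncard ≤ 2 := by
  have hf : ({a, b} : Set α).Finite := (Set.finite_singleton b).insert a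
  calc S.ncard ≤ ({a, b} : Set α).ncard := Set.ncard_le_ncard hsub hf
    _ ≤ 2 := by
        have h1 := Set.ncard_insert_le a ({b} : Set α)
        simpa [Set.ncard_singleton] using h1

lemma ncard_le_two' {α : Type*} {S T : Set α} (a : α) (hT : T.Subsingleton)
    (hsub : ∀ x ∈ S, x = a ∨ x ∈ T) : S.ncard ≤ 2 := by
  rcases T.eq_empty_or_nonempty with hE | ⟨r, hr⟩
  · refine ncard_le_two (a := a) (b := a) ?_
    intro x hx
    rcases hsub x hx with hx' | hx'
    · simp [hx']
    · rw [hE] at hx'; exact absurd hx' (Set.notMem_empty x)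
  · refine ncard_le_two (a := a) (b := r) ?_
    intro x hx
    rcases hsub x hx with hx' | hx'
    · simp [hx']
    · right; exact hT hx' hr
lemma fin4_not_both : ∀ j : Fin 4, ¬((j = 0 ∨ j = 2) ∧ (j = 1 ∨ j = 3)) := by decide

lemma ribSlot_subsingleton {ℓ : ℕ} (C : GChoices ℓ) (t : NRNode (h ℓ)) (j : Fin 4) :
    {u : BV (h ℓ) | ∃ sn i, u = Sum.inl (sn, i) ∧
      ribRel C (Sum.inl (sn, i)) (Sum.inr (t, j))}.Subsingleton := by
  rintro u ⟨s1, i1, rfl, hr1⟩ u' ⟨s2, i2, rfl, hr2⟩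
  simp only [ribRel] at hr1 hr2
  obtain ⟨ha1, hn1, hi1⟩ := hr1
  obtain ⟨ha2, hn2, hi2⟩ := hr2
  have hd : nodeDepth ((s1.1 : Fin (2 ^ h ℓ)) : ℕ) = nodeDepth ((s2.1 : Fin (2 ^ h ℓ)) : ℕ) :=
    NsetB ℓ _ _ _ hn1 hn2
  have hs : ((s1.1 : Fin (2 ^ h ℓ)) : ℕ) = ((s2.1 : Fin (2 ^ h ℓ)) : ℕ) :=
    anc_depth_unique s1.2 s2.2 ha1 ha2 hd
  have hss : s1 = s2 := Subtype.ext (Fin.ext hs)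
  subst hss
  rcases hi1 with ⟨hJ1, hi1⟩ | ⟨hJ1, hi1⟩ <;> rcases hi2 with ⟨hJ2, hi2⟩ | ⟨hJ2, hi2⟩
  · rw [hi1, hi2]
  · exact absurd ⟨hJ1, hJ2⟩ (fin4_not_both j)
  · exact absurd ⟨hJ2, hJ1⟩ (fin4_not_both j)
  · rw [hi1, hi2]
lemma main_bound {ℓ : ℕ} (C : GChoices ℓ) (v : BV (h ℓ)) :
    {u | (Gl C).Adj v u ∧ fOrd C.toBUChoices u < fOrd C.toBUChoices v}.ncard ≤ 2 := by
  match v with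
  | Sum.inl (s, i) =>
    have hs1 : 1 ≤ (s.1 : ℕ) := s.2
    refine ncard_le_two (a := Sum.inl (s, topIdx C.toBUChoices (s.1 : ℕ) + 1))
      (b := if i = topIdx C.toBUChoices (s.1 : ℕ) then
          Sum.inl (s, topIdx C.toBUChoices (s.1 : ℕ) + 2)
        else if h2 : 2 ≤ (s.1 : ℕ) then
          Sum.inr (⟨s.1, h2⟩,
            if i = other (C.μ (s.1 : ℕ) ((s.1 : ℕ) / 2)) (C.ε (s.1 : ℕ) ((s.1 : ℕ) / 2))
            then (1 : Fin 4) else 3)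
        else Sum.inl (s, topIdx C.toBUChoices (s.1 : ℕ) + 1)) ?_
    rintro u ⟨hadj, hlt⟩
    rw [Gl, SimpleGraph.fromRel_adj] at hadj
    obtain ⟨hne, hrel⟩ := hadj
    obtain (⟨s', i'⟩ | ⟨t', j'⟩) := u
    · -- u is a clique vertex
      simp only [buRel, ribRel, or_false, false_or] at hrel
      have hss : s = s' := by
        rcases hrel with ⟨h1, -⟩ | ⟨h1, -⟩
        · exact h1
        · exact h1.symm
      subst hss
      simp only [fOrd] at hlt
      have hcr : cR (topIdx C.toBUChoices (s.1 : ℕ)) i' <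
          cR (topIdx C.toBUChoices (s.1 : ℕ)) i := by omega
      rcases cR_lt_cases _ i i' hcr with h1 | ⟨h1, h2⟩
      · left; rw [h1]
      · right; rw [if_pos h1, h2]; exact rfl
    · -- u is a subdivision vertex
      have ht2 : 2 ≤ (t'.1 : ℕ) := t'.2
      simp only [buRel, ribRel, or_false, false_or] at hrel
      simp only [fOrd] at hlt
      have hjv := jval_le j'
      have hcr := cR_le (topIdx C.toBUChoices (s.1 : ℕ)) i
      rcases hrel with (⟨hp, hio⟩ | ⟨hp, hio⟩) | ⟨hanc, -, -⟩
      · -- child of s : too large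
        exfalso; omega
      · -- v is an endpoint of the top edge of K^s, u ∈ pred s
        have h2 : 2 ≤ (s.1 : ℕ) := by rw [hp]; exact ht2
        have hs_ne_one : (s.1 : ℕ) ≠ 1 := by omega
        have htopeq : topIdx C.toBUChoices (s.1 : ℕ) = C.μ (s.1 : ℕ) ((s.1 : ℕ) / 2) := by
          rw [topIdx, if_neg hs_ne_one]
        rw [← hp] at hio
        have hinot : i ≠ topIdx C.toBUChoices (s.1 : ℕ) := by
          rcases hio with ⟨-, hi⟩ | ⟨-, hi⟩ <;> rw [hi, htopeq] <;> exact other_ne _ _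
        right
        rw [if_neg hinot, dif_pos h2]
        have htt : t' = (⟨s.1, h2⟩ : NRNode (h ℓ)) := Subtype.ext (Fin.ext hp.symm)
        have hjj : j' = (if i = other (C.μ (s.1 : ℕ) ((s.1 : ℕ) / 2))
            (C.ε (s.1 : ℕ) ((s.1 : ℕ) / 2)) then (1 : Fin 4) else 3) := by
          rcases hio with ⟨hj, hi⟩ | ⟨hj, hi⟩
          · rw [if_pos hi, hj]
          · rw [if_neg, hj]
            rw [hi]
            exact (other_ne_not _ _).symm
        rw [htt, hjj]; exact rfl
      · -- rib towards a descendant : too large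
        exfalso
        have := strictAnc_le hanc
        omega
  | Sum.inr (t, j) =>
    have ht2 : 2 ≤ (t.1 : ℕ) := t.2
    have hlt2 : (t.1 : ℕ) / 2 < 2 ^ (h ℓ) := lt_of_le_of_lt (Nat.div_le_self _ _) t.1.isLt
    have hge1 : 1 ≤ (t.1 : ℕ) / 2 := by omega
    refine ncard_le_two' (T := {u : BV (h ℓ) | ∃ sn i, u = Sum.inl (sn, i) ∧
        ribRel C (Sum.inl (sn, i)) (Sum.inr (t, j))})
      (if j = 0 then
        Sum.inl ((⟨⟨(t.1 : ℕ) / 2, hlt2⟩, hge1⟩ : TNode (h ℓ)),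
          other (C.μ ((t.1 : ℕ) / 2) (t.1 : ℕ)) (C.ε ((t.1 : ℕ) / 2) (t.1 : ℕ)))
       else if j = 2 then
        Sum.inl ((⟨⟨(t.1 : ℕ) / 2, hlt2⟩, hge1⟩ : TNode (h ℓ)),
          other (C.μ ((t.1 : ℕ) / 2) (t.1 : ℕ)) (! C.ε ((t.1 : ℕ) / 2) (t.1 : ℕ)))
       else if j = 1 then Sum.inr (t, 0) else Sum.inr (t, 2))
      (ribSlot_subsingleton C t j) ?_
    rintro u ⟨hadj, hlt⟩
    rw [Gl, SimpleGraph.fromRel_adj] at hadj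
    obtain ⟨hne, hrel⟩ := hadj
    obtain (⟨s', i'⟩ | ⟨t', j'⟩) := u
    · -- u is a clique vertex
      simp only [buRel, ribRel, or_false, false_or] at hrel
      rcases hrel with (⟨hp, hio⟩ | ⟨hp, hio⟩) | hrib
      · -- u in the parent clique
        left
        have hspa : s' = (⟨⟨(t.1 : ℕ) / 2, hlt2⟩, hge1⟩ : TNode (h ℓ)) :=
          Subtype.ext (Fin.ext hp)
        rcases hio with ⟨hj, hi⟩ | ⟨hj, hi⟩
        · subst hj
          rw [if_pos rfl, hspa, hi, hp]
        · subst hj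
          rw [if_neg (by decide), if_pos rfl, hspa, hi, hp]
      · -- u in K^t : too large
        exfalso
        simp only [fOrd] at hlt
        have hjv := jval_le j
        have hcr := cR_le (topIdx C.toBUChoices ((s'.1 : Fin (2 ^ h ℓ)) : ℕ)) i'
        omega
      · -- rib edge
        right
        exact ⟨s', i', rfl, hrib⟩
    · -- u is a subdivision vertex
      simp only [buRel, ribRel, or_false, false_or] at hrel
      simp only [fOrd] at hlt
      rcases hrel with ⟨htt, hio⟩ | ⟨htt, hio⟩
      · -- partner later in the order : contradiction
        exfalso
        rw [← htt] at hlt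
        rcases hio with ⟨hj, hj'⟩ | ⟨hj, hj'⟩ <;> subst hj <;> subst hj' <;>
          simp only [show jval 0 = 0 from rfl, show jval 1 = 2 from rfl,
            show jval 2 = 1 from rfl, show jval 3 = 3 from rfl] at hlt <;> omega
      · -- partner earlier : u = a
        left
        have htteq : t' = t := htt
        subst htteq
        rcases hio with ⟨hj', hj⟩ | ⟨hj', hj⟩
        · subst hj; subst hj'
          rw [if_neg (by decide), if_neg (by decide), if_pos rfl]
        · subst hj; subst hj'
          rw [if_neg (by decide), if_neg (by decide), if_neg (by decide)]
/-- For every `ℓ ≥ 1` and every choice of the injections `μ_s` and of the rib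
endpoint labelings, the graph `G_ℓ` is 2-degenerate. -/
theorem statement8 :
    ∀ ℓ : ℕ, 1 ≤ ℓ → ∀ C : GChoices ℓ, KDeg (Gl C) 2 := by
  intro ℓ _ C S hS
  have hfin : S.Finite := Set.toFinite S
  obtain ⟨v, hv, hmax⟩ := Set.Finite.exists_maximalFor (fOrd C.toBUChoices) S hfin hS
  refine ⟨v, hv, ?_⟩
  have hsub : {u | u ∈ S ∧ (Gl C).Adj v u} ⊆
      {u | (Gl C).Adj v u ∧ fOrd C.toBUChoices u < fOrd C.toBUChoices v} := by
    rintro u ⟨huS, hadj⟩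
    refine ⟨hadj, ?_⟩
    rcases lt_or_ge (fOrd C.toBUChoices u) (fOrd C.toBUChoices v) with hc | hc
    · exact hc
    · exact absurd (fOrd_inj C.toBUChoices (le_antisymm hc (hmax huS hc))) ((Gl C).ne_of_adj hadj)
  exact le_trans (Set.ncard_le_ncard hsub (Set.toFinite _)) (main_bound C v)
end PaperDefs
end

section
/- For every integer ℓ ≥ 1 and every source s of B_ℓ, let L be the set of leaves of B_ℓ(s) and let X_s = V(K^s) ∪ ⋃_{t ∈ L} π⁻¹(t). Then X_s separates V(G_ℓ(s)) \ pred(s) from the remaining vertices of G_ℓ: every path in G_ℓ from a vertex of V(G_ℓ(s)) \ pred(s) to a vertex of V(G_ℓ) \ (V(G_ℓ(s)) \ pred(s)) contains a vertex of X_s. -/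
namespace PaperDefs


/-! ### Auxiliary lemmas for statement10 -/

lemma three_le_h : ∀ ℓ : ℕ, 3 ≤ h (ℓ + 1) := by
  intro ℓ
  induction ℓ with
  | zero => simp [h]
  | succ n ih => show 3 ≤ 2 + 2 * h (n + 1); omega

lemma h_succ_succ (n : ℕ) : h (n + 2) = 2 + 2 * h (n + 1) := rfl

lemma mem_shift {X : Set (ℕ × ℕ)} {c i j : ℕ} :
    (i, j) ∈ shift X c ↔ ∃ i₀ j₀, (i₀, j₀) ∈ X ∧ i = i₀ + c ∧ j = j₀ + c := by
  constructor
  · rintro ⟨⟨i₀, j₀⟩, hm, heq⟩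
    simp only [Prod.mk.injEq] at heq
    exact ⟨i₀, j₀, hm, heq.1.symm, heq.2.symm⟩
  · rintro ⟨i₀, j₀, hm, rfl, rfl⟩
    exact ⟨(i₀, j₀), hm, rfl⟩

lemma Nset_bounds : ∀ ℓ i j, (i, j) ∈ Nset ℓ → 1 ≤ i ∧ i < j ∧ j ≤ h ℓ := by
  intro ℓ
  induction ℓ with
  | zero => intro i j hm; simp [Nset] at hm
  | succ n ih =>
    match n, ih with
    | 0, _ =>
      intro i j hm
      simp only [Nset, Set.mem_singleton_iff, Prod.mk.injEq] at hm
      obtain ⟨rfl, rfl⟩ := hm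
      simp [h]
    | m + 1, ih =>
      intro i j hm
      have hh := three_le_h m
      have e2 : h (m + 2) = 2 + 2 * h (m + 1) := rfl
      have e3 : h (m + 1 + 1) = 2 + 2 * h (m + 1) := rfl
      rcases hm with (hm | hm) | hm
      · simp only [Set.mem_singleton_iff, Prod.mk.injEq] at hm
        obtain ⟨rfl, rfl⟩ := hm
        omega
      · obtain ⟨i₀, j₀, hm₀, rfl, rfl⟩ := mem_shift.mp hm
        have := ih i₀ j₀ hm₀
        omega
      · obtain ⟨i₀, j₀, hm₀, rfl, rfl⟩ := mem_shift.mp hm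
        have := ih i₀ j₀ hm₀
        omega

lemma Nset_left_inj : ∀ ℓ i j j', (i, j) ∈ Nset ℓ → (i, j') ∈ Nset ℓ → j = j' := by
  intro ℓ
  induction ℓ with
  | zero => intro i j j' hm; simp [Nset] at hm
  | succ n ih =>
    match n, ih with
    | 0, _ =>
      intro i j j' hm hm'
      simp only [Nset, Set.mem_singleton_iff, Prod.mk.injEq] at hm hm'
      omega
    | m + 1, ih =>
      intro i j j' hm hm'
      have hh := three_le_h m
      have e2 : h (m + 2) = 2 + 2 * h (m + 1) := rfl
      have e3 : h (m + 1 + 1) = 2 + 2 * h (m + 1) := rfl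
      rcases hm with (hm | hm) | hm <;> rcases hm' with (hm' | hm') | hm'
      · simp only [Set.mem_singleton_iff, Prod.mk.injEq] at hm hm'
        omega
      · simp only [Set.mem_singleton_iff, Prod.mk.injEq] at hm
        obtain ⟨i₀, j₀, hm₀, hi, hj⟩ := mem_shift.mp hm'
        have := Nset_bounds _ _ _ hm₀
        omega
      · simp only [Set.mem_singleton_iff, Prod.mk.injEq] at hm
        obtain ⟨i₀, j₀, hm₀, hi, hj⟩ := mem_shift.mp hm'
        have := Nset_bounds _ _ _ hm₀
        omega
      · simp only [Set.mem_singleton_iff, Prod.mk.injEq] at hm'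
        obtain ⟨i₀, j₀, hm₀, hi, hj⟩ := mem_shift.mp hm
        have := Nset_bounds _ _ _ hm₀
        omega
      · obtain ⟨i₀, j₀, hm₀, hi, hj⟩ := mem_shift.mp hm
        obtain ⟨i₁, j₁, hm₁, hi', hj'⟩ := mem_shift.mp hm'
        have : i₀ = i₁ := by omega
        subst this
        have := ih i₀ j₀ j₁ hm₀ hm₁
        omega
      · obtain ⟨i₀, j₀, hm₀, hi, hj⟩ := mem_shift.mp hm
        obtain ⟨i₁, j₁, hm₁, hi', hj'⟩ := mem_shift.mp hm'
        have hb := Nset_bounds _ _ _ hm₀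
        have hb' := Nset_bounds _ _ _ hm₁
        omega
      · simp only [Set.mem_singleton_iff, Prod.mk.injEq] at hm'
        obtain ⟨i₀, j₀, hm₀, hi, hj⟩ := mem_shift.mp hm
        have := Nset_bounds _ _ _ hm₀
        omega
      · obtain ⟨i₀, j₀, hm₀, hi, hj⟩ := mem_shift.mp hm
        obtain ⟨i₁, j₁, hm₁, hi', hj'⟩ := mem_shift.mp hm'
        have hb := Nset_bounds _ _ _ hm₀
        have hb' := Nset_bounds _ _ _ hm₁
        omega
      · obtain ⟨i₀, j₀, hm₀, hi, hj⟩ := mem_shift.mp hm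
        obtain ⟨i₁, j₁, hm₁, hi', hj'⟩ := mem_shift.mp hm'
        have : i₀ = i₁ := by omega
        subst this
        have := ih i₀ j₀ j₁ hm₀ hm₁
        omega

lemma Nset_laminar : ∀ ℓ i j i' j', (i, j) ∈ Nset ℓ → (i', j') ∈ Nset ℓ →
    j' < i ∨ j < i' ∨ (i ≤ i' ∧ j' ≤ j) ∨ (i' ≤ i ∧ j ≤ j') := by
  intro ℓ
  induction ℓ with
  | zero => intro i j i' j' hm; simp [Nset] at hm
  | succ n ih =>
    match n, ih with
    | 0, _ =>
      intro i j i' j' hm hm'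
      simp only [Nset, Set.mem_singleton_iff, Prod.mk.injEq] at hm hm'
      omega
    | m + 1, ih =>
      intro i j i' j' hm hm'
      have hh := three_le_h m
      have e2 : h (m + 2) = 2 + 2 * h (m + 1) := rfl
      have e3 : h (m + 1 + 1) = 2 + 2 * h (m + 1) := rfl
      rcases hm with (hm | hm) | hm
      · simp only [Set.mem_singleton_iff, Prod.mk.injEq] at hm
        have := Nset_bounds _ _ _ hm'
        omega
      all_goals rcases hm' with (hm' | hm') | hm'
      · simp only [Set.mem_singleton_iff, Prod.mk.injEq] at hm'
        have hb := mem_shift.mp hm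
        obtain ⟨i₀, j₀, hm₀, hi, hj⟩ := hb
        have := Nset_bounds _ _ _ hm₀
        omega
      · obtain ⟨i₀, j₀, hm₀, hi, hj⟩ := mem_shift.mp hm
        obtain ⟨i₁, j₁, hm₁, hi', hj'⟩ := mem_shift.mp hm'
        have := ih i₀ j₀ i₁ j₁ hm₀ hm₁
        omega
      · obtain ⟨i₀, j₀, hm₀, hi, hj⟩ := mem_shift.mp hm
        obtain ⟨i₁, j₁, hm₁, hi', hj'⟩ := mem_shift.mp hm'
        have hb := Nset_bounds _ _ _ hm₀
        have hb' := Nset_bounds _ _ _ hm₁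
        omega
      · simp only [Set.mem_singleton_iff, Prod.mk.injEq] at hm'
        obtain ⟨i₀, j₀, hm₀, hi, hj⟩ := mem_shift.mp hm
        have := Nset_bounds _ _ _ hm₀
        omega
      · obtain ⟨i₀, j₀, hm₀, hi, hj⟩ := mem_shift.mp hm
        obtain ⟨i₁, j₁, hm₁, hi', hj'⟩ := mem_shift.mp hm'
        have hb := Nset_bounds _ _ _ hm₀
        have hb' := Nset_bounds _ _ _ hm₁
        omega
      · obtain ⟨i₀, j₀, hm₀, hi, hj⟩ := mem_shift.mp hm
        obtain ⟨i₁, j₁, hm₁, hi', hj'⟩ := mem_shift.mp hm'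
        have := ih i₀ j₀ i₁ j₁ hm₀ hm₁
        omega

/-! ### Tree (heap-index) lemmas -/

lemma nodeDepth_pos (i : ℕ) : 1 ≤ nodeDepth i := Nat.succ_le_succ (Nat.zero_le _)

lemma nodeDepth_half {t : ℕ} (ht : 2 ≤ t) : nodeDepth (t / 2) + 1 = nodeDepth t := by
  unfold nodeDepth
  have h1 : Nat.log 2 (t / 2) = Nat.log 2 t - 1 := Nat.log_div_base 2 t
  have h2 : 0 < Nat.log 2 t := Nat.log_pos one_lt_two ht
  omega

lemma nodeDepth_divpow (t : ℕ) : ∀ k : ℕ, 1 ≤ t / 2 ^ k →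
    nodeDepth (t / 2 ^ k) + k = nodeDepth t := by
  intro k
  induction k with
  | zero => intro _; simp
  | succ m ih =>
    intro h1
    have e : t / 2 ^ (m + 1) = (t / 2 ^ m) / 2 := by
      rw [Nat.div_div_eq_div_mul, ← pow_succ]
    rw [e] at h1 ⊢
    have h2 : 2 ≤ t / 2 ^ m := by omega
    have h3 := nodeDepth_half h2
    have h4 := ih (by omega)
    omega

lemma anc_refl (s : ℕ) : anc s s := ⟨0, by simp⟩

lemma anc_depth_le {s t : ℕ} (hs : 1 ≤ s) (h : anc s t) : nodeDepth s ≤ nodeDepth t := by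
  obtain ⟨k, hk⟩ := h
  have h2 := nodeDepth_divpow t k (by omega)
  rw [hk] at h2
  omega

lemma strictAnc_depth_lt {s t : ℕ} (hs : 1 ≤ s) (h : strictAnc s t) :
    nodeDepth s < nodeDepth t := by
  obtain ⟨k, hk1, hk⟩ := h
  have h2 := nodeDepth_divpow t k (by omega)
  rw [hk] at h2
  omega

lemma strictAnc_anc {s t : ℕ} (h : strictAnc s t) : anc s t := ⟨h.choose, h.choose_spec.2⟩

lemma anc_trans {s s' t : ℕ} (h1 : anc s s') (h2 : anc s' t) : anc s t := by
  obtain ⟨k1, hk1⟩ := h1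
  obtain ⟨k2, hk2⟩ := h2
  exact ⟨k2 + k1, by rw [pow_add, ← Nat.div_div_eq_div_mul, hk2, hk1]⟩

lemma anc_parent_step {s t : ℕ} (h : anc s (t / 2)) : anc s t := by
  obtain ⟨k, hk⟩ := h
  refine ⟨k + 1, ?_⟩
  rw [pow_succ', ← Nat.div_div_eq_div_mul]
  exact hk

lemma anc_cases {s t : ℕ} (h : anc s t) : t = s ∨ anc s (t / 2) := by
  obtain ⟨k, hk⟩ := h
  cases k with
  | zero => left; simpa using hk
  | succ m =>
    right
    refine ⟨m, ?_⟩
    rw [Nat.div_div_eq_div_mul, ← pow_succ']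
    exact hk

lemma anc_ne_strict {s t : ℕ} (h : anc s t) (hne : t ≠ s) : strictAnc s t := by
  obtain ⟨k, hk⟩ := h
  cases k with
  | zero => exact absurd (by simpa using hk) hne
  | succ m => exact ⟨m + 1, by omega, hk⟩

lemma anc_total {s s' t : ℕ} (h1 : anc s t) (h2 : strictAnc s' t) :
    anc s s' ∨ strictAnc s' s := by
  obtain ⟨m, hm⟩ := h1
  obtain ⟨k, hk1, hk⟩ := h2
  rcases le_or_gt k m with hle | hlt
  · left
    refine ⟨m - k, ?_⟩
    rw [← hk, Nat.div_div_eq_div_mul, ← pow_add]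
    rw [show k + (m - k) = m by omega]
    exact hm
  · right
    refine ⟨k - m, by omega, ?_⟩
    rw [← hm, Nat.div_div_eq_div_mul, ← pow_add]
    rw [show m + (k - m) = k by omega]
    exact hk

lemma anc_strictAnc_asymm {s s' : ℕ} (hs : 1 ≤ s) (hs' : 1 ≤ s')
    (h1 : anc s s') (h2 : strictAnc s' s) : False := by
  have := anc_depth_le hs h1
  have := strictAnc_depth_lt hs' h2
  omega

/-! ### Vertex-level lemmas -/

lemma not_inPred_inl {p s : ℕ} (sn : TNode p) (i : Fin 3) :
    ¬ InPred s (Sum.inl (sn, i) : BV p) := by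
  rintro ⟨t, j, hj, -⟩
  exact Sum.inl_ne_inr hj

lemma inPred_inr {p s : ℕ} (tn : NRNode p) (j : Fin 4) :
    InPred s (Sum.inr (tn, j) : BV p) ↔ (tn.1 : ℕ) = s := by
  constructor
  · rintro ⟨t, j', hj, hts⟩
    obtain ⟨h1, -⟩ := Prod.mk.injEq .. ▸ Sum.inr.injEq .. ▸ hj
    · exact h1 ▸ hts
  · intro h; exact ⟨tn, j, rfl, h⟩

lemma adj_structure {ℓ : ℕ} (C : GChoices ℓ) {u w : BV (h ℓ)} (hadj : (Gl C).Adj u w) :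
    (∃ (sn : TNode (h ℓ)) (i : Fin 3) (sn' : TNode (h ℓ)) (i' : Fin 3),
        u = Sum.inl (sn, i) ∧ w = Sum.inl (sn', i') ∧ sn = sn') ∨
    (∃ (tn : NRNode (h ℓ)) (j : Fin 4) (tn' : NRNode (h ℓ)) (j' : Fin 4),
        u = Sum.inr (tn, j) ∧ w = Sum.inr (tn', j') ∧ tn = tn') ∨
    (∃ (sn : TNode (h ℓ)) (i : Fin 3) (tn : NRNode (h ℓ)) (j : Fin 4),
        ((u = Sum.inl (sn, i) ∧ w = Sum.inr (tn, j)) ∨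
          (w = Sum.inl (sn, i) ∧ u = Sum.inr (tn, j))) ∧
        ((sn.1 : ℕ) = (tn.1 : ℕ) / 2 ∨ (sn.1 : ℕ) = (tn.1 : ℕ) ∨
          (strictAnc (sn.1 : ℕ) (tn.1 : ℕ) ∧
            (nodeDepth (sn.1 : ℕ), nodeDepth (tn.1 : ℕ)) ∈ Nset ℓ))) := by
  have h' : buRel C.toBUChoices u w ∨ ribRel C u w ∨
      buRel C.toBUChoices w u ∨ ribRel C w u := by
    have := ((SimpleGraph.fromRel_adj _ u w).mp hadj).2
    tauto
  rcases u with ⟨sn, i⟩ | ⟨tn, j⟩ <;> rcases w with ⟨sn', i'⟩ | ⟨tn', j'⟩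
  · left
    refine ⟨sn, i, sn', i', rfl, rfl, ?_⟩
    simp only [buRel, ribRel] at h'
    tauto
  · right; right
    refine ⟨sn, i, tn', j', Or.inl ⟨rfl, rfl⟩, ?_⟩
    simp only [buRel, ribRel] at h'
    rcases h' with (⟨h1, -⟩ | ⟨h1, -⟩) | ⟨h1, h2, -⟩ | h' | h'
    · exact Or.inl h1
    · exact Or.inr (Or.inl h1)
    · exact Or.inr (Or.inr ⟨h1, h2⟩)
    · exact absurd h' not_false
    · exact absurd h' not_false
  · right; right
    refine ⟨sn', i', tn, j, Or.inr ⟨rfl, rfl⟩, ?_⟩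
    simp only [buRel, ribRel] at h'
    rcases h' with h' | h' | (⟨h1, -⟩ | ⟨h1, -⟩) | ⟨h1, h2, -⟩
    · exact absurd h' not_false
    · exact absurd h' not_false
    · exact Or.inl h1
    · exact Or.inr (Or.inl h1)
    · exact Or.inr (Or.inr ⟨h1, h2⟩)
  · right; left
    refine ⟨tn, j, tn', j', rfl, rfl, ?_⟩
    simp only [buRel, ribRel] at h'
    tauto

lemma cross_lemma {ℓ : ℕ} (C : GChoices ℓ) {s a : ℕ} (hsrc : IsSourceOfRank ℓ s a)
    {u w : BV (h ℓ)} (hadj : (Gl C).Adj u w)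
    (hu : SubtreeNode ℓ s a (πn u) ∧ ¬ InPred s u)
    (hw : ¬ (SubtreeNode ℓ s a (πn w) ∧ ¬ InPred s w)) :
    ((∃ sn i, u = Sum.inl (sn, i) ∧ (sn.1 : ℕ) = s) ∨
      (anc s (πn u) ∧ nodeDepth (πn u) = nodeDepth s + h a - 1)) ∨
    ((∃ sn i, w = Sum.inl (sn, i) ∧ (sn.1 : ℕ) = s) ∨
      (anc s (πn w) ∧ nodeDepth (πn w) = nodeDepth s + h a - 1)) := by
  obtain ⟨⟨hs1, hslt⟩, ha1, haℓ, hmem⟩ := hsrc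
  set D := nodeDepth s + h a - 1 with hD
  have hsD : nodeDepth s < D := (Nset_bounds ℓ _ _ hmem).2.1
  rcases adj_structure C hadj with
    ⟨sn, i, sn', i', rfl, rfl, rfl⟩ | ⟨tn, j, tn', j', rfl, rfl, rfl⟩ |
    ⟨sn, i, tn, j, horient, hrel⟩
  · -- clique edge
    exact absurd ⟨hu.1, not_inPred_inl _ _⟩ hw
  · -- pred-pair edge
    refine absurd ⟨hu.1, ?_⟩ hw
    rw [inPred_inr]
    exact fun h => hu.2 ((inPred_inr tn j).mpr h)
  · -- mixed edge
    set s' := (sn.1 : ℕ) with hs'def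
    set t := (tn.1 : ℕ) with htdef
    have hs'1 : 1 ≤ s' := sn.2
    have ht2 : 2 ≤ t := tn.2
    rcases horient with ⟨rfl, rfl⟩ | ⟨rfl, rfl⟩
    · -- u = inl (sn, i), w = inr (tn, j)
      have hA : anc s s' ∧ nodeDepth s' ≤ D := hu.1
      have hwt : ¬ (anc s t ∧ nodeDepth t ≤ D ∧ t ≠ s) := by
        rintro ⟨h1, h2, h3⟩
        exact hw ⟨⟨h1, h2⟩, fun h => h3 ((inPred_inr tn j).mp h)⟩
      rcases hrel with hpar | hbot | ⟨hstr, hNt⟩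
      · -- parent edge
        have hanct : anc s t := anc_parent_step (hpar ▸ hA.1)
        have htne : t ≠ s := by
          intro heq
          have h2 := anc_depth_le hs1 (hpar ▸ hA.1)
          have h3 := nodeDepth_half ht2
          rw [heq] at h2 h3
          omega
        have hgt : D < nodeDepth t := by
          by_contra hc
          exact hwt ⟨hanct, by omega, htne⟩
        have h3 := nodeDepth_half ht2
        have h4 : nodeDepth s' = nodeDepth (t / 2) := by rw [hpar]
        refine Or.inl (Or.inr ⟨hA.1, ?_⟩)
        show nodeDepth s' = _
        omega
      · -- bottom edge, s' = t
        by_cases hts : t = s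
        · refine Or.inl (Or.inl ⟨sn, i, rfl, ?_⟩)
          rw [← hs'def]
          omega
        · have h4 : nodeDepth s' = nodeDepth t := by rw [hbot]
          exact absurd ⟨hbot ▸ hA.1, by omega, hts⟩ hwt
      · -- rib edge
        exfalso
        have hanct : anc s t := anc_trans hA.1 (strictAnc_anc hstr)
        have htne : t ≠ s := by
          rintro rfl
          exact anc_strictAnc_asymm hs1 hs'1 hA.1 hstr
        have hgt : D < nodeDepth t := by
          by_contra hc
          exact hwt ⟨hanct, by omega, htne⟩
        have hle := anc_depth_le hs1 hA.1
        have hlam := Nset_laminar ℓ _ _ _ _ hmem hNt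
        have hbd := Nset_bounds ℓ _ _ hNt
        have heq : nodeDepth s' = nodeDepth s := by omega
        rw [heq] at hNt
        have := Nset_left_inj ℓ _ _ _ hmem hNt
        omega
    · -- w = inl (sn, i), u = inr (tn, j)
      have hA : anc s t ∧ nodeDepth t ≤ D := hu.1
      have htne : t ≠ s := fun h => hu.2 ((inPred_inr tn j).mpr h)
      have hws : ¬ (anc s s' ∧ nodeDepth s' ≤ D) := by
        rintro ⟨h1, h2⟩
        exact hw ⟨⟨h1, h2⟩, not_inPred_inl sn i⟩
      have hstrt : strictAnc s t := anc_ne_strict hA.1 htne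
      have hdt : nodeDepth s < nodeDepth t := strictAnc_depth_lt hs1 hstrt
      rcases hrel with hpar | hbot | ⟨hstr, hNt⟩
      · -- parent edge
        rcases anc_cases hA.1 with h | h
        · exact absurd h htne
        · have h3 := nodeDepth_half ht2
          have h4 : nodeDepth s' = nodeDepth (t / 2) := by rw [hpar]
          exact absurd ⟨hpar ▸ h, by omega⟩ hws
      · exact absurd ⟨hbot ▸ hA.1, hbot ▸ hA.2⟩ hws
      · -- rib edge
        rcases anc_total hA.1 hstr with hss' | hs's
        · have := strictAnc_depth_lt hs'1 hstr
          exact absurd ⟨hss', by omega⟩ hws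
        · have hlt := strictAnc_depth_lt hs'1 hs's
          have hlam := Nset_laminar ℓ _ _ _ _ hmem hNt
          have hbd := Nset_bounds ℓ _ _ hNt
          refine Or.inl (Or.inr ⟨hA.1, ?_⟩)
          show nodeDepth t = _
          omega


/-- For every `ℓ ≥ 1` and every source `s` of `B_ℓ` (of rank `a`), the set
`X_s = V(K^s) ∪ ⋃_{t leaf of B_ℓ(s)} π⁻¹(t)` separates `V(G_ℓ(s)) \ pred(s)`
from the remaining vertices of `G_ℓ`: every walk of `G_ℓ` from a vertex of
`V(G_ℓ(s)) \ pred(s)` to a vertex outside this set meets `X_s`. -/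
theorem statement10 :
    ∀ ℓ : ℕ, 1 ≤ ℓ → ∀ C : GChoices ℓ, ∀ s a : ℕ, IsSourceOfRank ℓ s a →
      ∀ u w : BV (h ℓ), ∀ W : (Gl C).Walk u w,
        (SubtreeNode ℓ s a (πn u) ∧ ¬ InPred s u) →
        ¬ (SubtreeNode ℓ s a (πn w) ∧ ¬ InPred s w) →
        ∃ z ∈ W.support,
          (∃ sn i, z = Sum.inl (sn, i) ∧ (sn.1 : ℕ) = s) ∨
          (anc s (πn z) ∧ nodeDepth (πn z) = nodeDepth s + h a - 1) := by
  intro ℓ hℓ C s a hsrc u w W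
  induction W with
  | nil =>
    intro hu hw
    exact absurd hu hw
  | @cons x y z hadj p ih =>
    intro hu hw
    by_cases hy : SubtreeNode ℓ s a (πn y) ∧ ¬ InPred s y
    · obtain ⟨v, hv, hvX⟩ := ih hy hw
      exact ⟨v, by rw [SimpleGraph.Walk.support_cons]; exact List.mem_cons_of_mem _ hv, hvX⟩
    · rcases cross_lemma C hsrc hadj hu hy with hX | hX
      · exact ⟨x, SimpleGraph.Walk.start_mem_support _, hX⟩
      · exact ⟨y, by
          rw [SimpleGraph.Walk.support_cons]
          exact List.mem_cons_of_mem _ p.start_mem_support, hX⟩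


end PaperDefs
end
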